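/- In the Passive T-Maze, the credit assignment length of the unique optimal policy equals 1: at every history visited by the optimal policy at time t < T with the greedy action set a proper subset of actions, the greedy action strictly exceeds every non-greedy action in expected 1-step (immediate) reward, and at time T the greedy action (toward the revealed goal) strictly exceeds the alternatives in immediate reward. -/
import Mathlib


open Finset

/-- A T-Maze state: a grid position (horizontal, vertical) and the goal identity
(`true` = upper goal G1, `false` = lower goal G2). -/
abbrev TState : Type := (ℤ × ℤ) × Bool

/-- Observations in the T-Maze. -/
inductive TObs : Type
  | oracle (g : Bool)   -- at the oracle cell the goal is revealed
  | junction
  | goalObs (g : Bool)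
  | corridor
  deriving DecidableEq

/-- The four actions: 0 = Left, 1 = Right, 2 = Up, 3 = Down. -/
def dir : Fin 4 → ℤ × ℤ := ![(-1, 0), (1, 0), (0, 1), (0, -1)]

/-- Valid cells: a corridor from `x = x0` to the junction `(L, 0)`, plus the two goal
cells `(L, 1)` and `(L, -1)`. -/
def validP (x0 L : ℤ) (p : ℤ × ℤ) : Prop :=
  (x0 ≤ p.1 ∧ p.1 ≤ L ∧ p.2 = 0) ∨ (p.1 = L ∧ (p.2 = 1 ∨ p.2 = -1))

instance (x0 L : ℤ) (p : ℤ × ℤ) : Decidable (validP x0 L p) := by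
  unfold validP; infer_instance

/-- Deterministic transition: move in the chosen direction, staying in place at walls. -/
def stepP (x0 L : ℤ) (s : TState) (a : Fin 4) : TState :=
  if validP x0 L (s.1 + dir a) then (s.1 + dir a, s.2) else s

/-- The cell of the sampled goal. -/
def goalCell (L : ℤ) (g : Bool) : ℤ × ℤ := (L, if g then 1 else -1)

/-- Reward `R_t` of the Passive T-Maze (horizon `T`, corridor length `L = T - 1`):
`R_t = (1[x_{t+1} ≥ t] - 1)/(T-1)` for `t ≤ T - 1`, and `R_T = 1[o_{T+1} = G]`. -/
noncomputable def rewP (T : ℕ) (t : ℕ) (s : TState) (a : Fin 4) : ℝ :=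
  let L : ℤ := (T : ℤ) - 1
  let s' := stepP 0 L s a
  if t < T then ((if (t : ℤ) ≤ s'.1.1 then (1 : ℝ) else 0) - 1) / ((T : ℝ) - 1)
  else if s'.1 = goalCell L s.2 then 1 else 0

/-- Return of a deterministic open-loop plan from time `t`, over `n` steps. -/
noncomputable def dRetP (T : ℕ) (plan : ℕ → Fin 4) : ℕ → ℕ → TState → ℝ
  | 0, _, _ => 0
  | n + 1, t, s =>
      rewP T t s (plan t) + dRetP T plan n (t + 1) (stepP 0 ((T : ℤ) - 1) s (plan t))

/-- The unique optimal policy: move Right for `T - 1` steps, then toward the goal `g`. -/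
def optPlan (T : ℕ) (g : Bool) (t : ℕ) : Fin 4 :=
  if t < T then 1 else if g then 2 else 3

/-- Expected `n`-step reward `G^{π*}_n` of taking `a` at time `t` in state `s` and then
following the optimal policy. -/
noncomputable def GnP (T : ℕ) (g : Bool) : ℕ → ℕ → TState → Fin 4 → ℝ
  | 0, _, _, _ => 0
  | n + 1, t, s, a =>
      rewP T t s a + dRetP T (optPlan T g) n (t + 1) (stepP 0 ((T : ℤ) - 1) s a)

/-- The state visited by the optimal policy at time `t = k + 1` (goal `g`). -/
def trajP (T : ℕ) (g : Bool) : ℕ → TState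
  | 0 => ((0, 0), g)
  | k + 1 => stepP 0 ((T : ℤ) - 1) (trajP T g k) (optPlan T g (k + 1))

/-- Greedy actions at the history visited at time `t`: maximizers of the `(T-t+1)`-step
reward (the Q-value) under the optimal policy. -/
def AstarP (T : ℕ) (g : Bool) (t : ℕ) : Set (Fin 4) :=
  {a | ∀ a', GnP T g (T - t + 1) t (trajP T g (t - 1)) a' ≤
      GnP T g (T - t + 1) t (trajP T g (t - 1)) a}


lemma dir_zero : dir 0 = (-1, 0) := rfl
lemma dir_one : dir 1 = (1, 0) := rfl
lemma dir_two : dir 2 = (0, 1) := rfl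
lemma dir_three : dir 3 = (0, -1) := rfl

lemma step_valid {x0 L : ℤ} {s : TState} {a : Fin 4} (h : validP x0 L (s.1 + dir a)) :
    stepP x0 L s a = (s.1 + dir a, s.2) := if_pos h

lemma step_invalid {x0 L : ℤ} {s : TState} {a : Fin 4} (h : ¬ validP x0 L (s.1 + dir a)) :
    stepP x0 L s a = s := if_neg h

lemma rewP_lt {T t : ℕ} (ht : t < T) (s : TState) (a : Fin 4) :
    rewP T t s a = ((if (t:ℤ) ≤ (stepP 0 ((T:ℤ)-1) s a).1.1 then (1:ℝ) else 0) - 1) / ((T:ℝ)-1) := by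
  simp [rewP, ht]

lemma rewP_ge {T t : ℕ} (ht : ¬ t < T) (s : TState) (a : Fin 4) :
    rewP T t s a = if (stepP 0 ((T:ℤ)-1) s a).1 = goalCell ((T:ℤ)-1) s.2 then 1 else 0 := by
  simp [rewP, ht]

lemma dRetP_succ (T : ℕ) (plan : ℕ → Fin 4) (n t : ℕ) (s : TState) :
    dRetP T plan (n+1) t s
      = rewP T t s (plan t) + dRetP T plan n (t + 1) (stepP 0 ((T : ℤ) - 1) s (plan t)) := rfl

lemma GnP_succ (T : ℕ) (g : Bool) (n t : ℕ) (s : TState) (a : Fin 4) :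
    GnP T g (n+1) t s a
      = rewP T t s a + dRetP T (optPlan T g) n (t + 1) (stepP 0 ((T : ℤ) - 1) s a) := rfl

lemma trajP_eq (T : ℕ) (g : Bool) : ∀ k, k < T → trajP T g k = (((k : ℤ), 0), g) := by
  intro k
  induction k with
  | zero => intro _; rfl
  | succ k ih =>
    intro hk
    rw [trajP, ih (by omega)]
    have hplan : optPlan T g (k+1) = 1 := if_pos (by omega)
    rw [hplan, step_valid]
    · simp [dir_one, Prod.ext_iff]
      
    · simp only [dir_one, Prod.mk_add_mk]
      left
      refine ⟨by positivity, by push_cast; omega, rfl⟩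

lemma dRet_on_track (T : ℕ) (hT : 2 ≤ T) (g : Bool) :
    ∀ m u, 1 ≤ m → u + m = T + 1 →
      dRetP T (optPlan T g) m u ((((u:ℤ) - 1), 0), g) = 1 := by
  intro m
  induction m with
  | zero => omega
  | succ m ih =>
    intro u h1 h2
    rcases Nat.eq_zero_or_pos m with hm | hm
    · subst hm
      have hu : T = u := by omega
      subst hu
      rw [dRetP_succ]
      have hplan : optPlan T g T = if g then 2 else 3 := if_neg (lt_irrefl T)
      rw [hplan]
      cases g with
      | true =>
        have hv : validP 0 ((T:ℤ)-1) ((((T:ℤ) - 1), (0:ℤ)) + dir 2) := by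
          simp only [dir_two, Prod.mk_add_mk]; right; constructor <;> simp
        rw [if_pos rfl, step_valid (s := ((((T:ℤ) - 1), 0), true)) hv,
          rewP_ge (lt_irrefl T), step_valid (s := ((((T:ℤ) - 1), 0), true)) hv]
        simp [goalCell, dir_two, dRetP]
      | false =>
        have hv : validP 0 ((T:ℤ)-1) ((((T:ℤ) - 1), (0:ℤ)) + dir 3) := by
          simp only [dir_three, Prod.mk_add_mk]; right; constructor <;> simp
        rw [if_neg (by simp), step_valid (s := ((((T:ℤ) - 1), 0), false)) hv,
          rewP_ge (lt_irrefl T), step_valid (s := ((((T:ℤ) - 1), 0), false)) hv]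
        simp [goalCell, dir_three, dRetP]
    · have huT : u < T := by omega
      have hplan : optPlan T g u = 1 := if_pos huT
      rw [dRetP_succ, hplan]
      have hv : validP 0 ((T:ℤ)-1) ((((u:ℤ) - 1), (0:ℤ)) + dir 1) := by
        simp only [dir_one, Prod.mk_add_mk]
        left
        refine ⟨by omega, by push_cast; omega, rfl⟩
      rw [step_valid (s := ((((u:ℤ) - 1), 0), g)) hv]
      have hrw : rewP T u ((((u:ℤ) - 1), 0), g) 1 = 0 := by
        rw [rewP_lt huT, step_valid (s := ((((u:ℤ) - 1), 0), g)) hv]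
        simp [dir_one]
      rw [hrw]
      have := ih (u+1) hm (by omega)
      simp only [dir_one, Prod.mk_add_mk] at *
      rw [show ((u:ℤ) - 1 + 1, (0:ℤ) + 0) = ((((u+1:ℕ):ℤ) - 1), 0) by
        push_cast; simp [Prod.ext_iff]]
      rw [this]
      ring

lemma dRet_off_track (T : ℕ) (hT : 2 ≤ T) (g : Bool) :
    ∀ m u (x : ℤ), 1 ≤ m → u + m = T + 1 → 0 ≤ x → x ≤ (u:ℤ) - 2 →
      dRetP T (optPlan T g) m u ((x, 0), g) = -((m:ℝ) - 1) / ((T:ℝ) - 1) := by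
  intro m
  induction m with
  | zero => omega
  | succ m ih =>
    intro u x h1 h2 hx0 hx2
    rcases Nat.eq_zero_or_pos m with hm | hm
    · subst hm
      have hu : T = u := by omega
      subst hu
      rw [dRetP_succ]
      have hplan : optPlan T g T = if g then 2 else 3 := if_neg (lt_irrefl T)
      rw [hplan]
      have hxL : x ≠ (T:ℤ) - 1 := by omega
      cases g with
      | true =>
        have hv : ¬ validP 0 ((T:ℤ)-1) ((x, (0:ℤ)) + dir 2) := by
          simp only [dir_two, Prod.mk_add_mk, validP]
          push_neg
          constructor
          · intro _ _; omega
          · intro h; omega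
        rw [if_pos rfl, step_invalid (s := ((x, 0), true)) hv,
          rewP_ge (lt_irrefl T), step_invalid (s := ((x, 0), true)) hv]
        rw [if_neg (by simp [goalCell, Prod.ext_iff])]
        simp [dRetP]
      | false =>
        have hv : ¬ validP 0 ((T:ℤ)-1) ((x, (0:ℤ)) + dir 3) := by
          simp only [dir_three, Prod.mk_add_mk, validP]
          push_neg
          constructor
          · intro _ _; omega
          · intro h; omega
        rw [if_neg (by simp), step_invalid (s := ((x, 0), false)) hv,
          rewP_ge (lt_irrefl T), step_invalid (s := ((x, 0), false)) hv]
        rw [if_neg (by simp [goalCell, Prod.ext_iff])]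
        simp [dRetP]
    · have huT : u < T := by omega
      have hplan : optPlan T g u = 1 := if_pos huT
      rw [dRetP_succ, hplan]
      have hv : validP 0 ((T:ℤ)-1) ((x, (0:ℤ)) + dir 1) := by
        simp only [dir_one, Prod.mk_add_mk]
        left
        refine ⟨by omega, by omega, rfl⟩
      rw [step_valid (s := ((x, 0), g)) hv]
      have hrw : rewP T u ((x, 0), g) 1 = -1 / ((T:ℝ) - 1) := by
        rw [rewP_lt huT, step_valid (s := ((x, 0), g)) hv]
        rw [if_neg (by simp only [dir_one, Prod.mk_add_mk]; omega)]
        norm_num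
      rw [hrw]
      simp only [dir_one, Prod.mk_add_mk]
      rw [show (x + 1, (0:ℤ) + 0) = (x + 1, (0:ℤ)) by norm_num]
      rw [ih (u+1) (x+1) hm (by omega) (by omega) (by push_cast; omega)]
      have hTne : (T:ℝ) - 1 ≠ 0 := by
        have : (2:ℝ) ≤ T := by exact_mod_cast hT
        linarith
      field_simp
      push_cast
      ring

lemma Gfull_right (T : ℕ) (hT : 2 ≤ T) (g : Bool) (t : ℕ) (ht1 : 1 ≤ t) (htT : t < T) :
    GnP T g (T - t + 1) t ((((t:ℤ)-1), 0), g) 1 = 1 := by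
  rw [GnP_succ]
  have hv : validP 0 ((T:ℤ)-1) ((((t:ℤ) - 1), (0:ℤ)) + dir 1) := by
    simp only [dir_one, Prod.mk_add_mk]
    exact Or.inl ⟨by omega, by omega, rfl⟩
  rw [step_valid (s := ((((t:ℤ) - 1), 0), g)) hv]
  have hrw : rewP T t ((((t:ℤ) - 1), 0), g) 1 = 0 := by
    rw [rewP_lt htT, step_valid (s := ((((t:ℤ) - 1), 0), g)) hv]
    simp [dir_one]
  rw [hrw]
  simp only [dir_one, Prod.mk_add_mk]
  have := dRet_on_track T hT g (T - t) (t + 1) (by omega) (by omega)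
  rw [show ((t:ℤ) - 1 + 1, (0:ℤ) + 0) = ((((t+1:ℕ):ℤ) - 1), 0) by push_cast; simp [Prod.ext_iff]]
  rw [this]; ring

lemma Gfull_off (T : ℕ) (hT : 2 ≤ T) (g : Bool) (t : ℕ) (ht1 : 1 ≤ t) (htT : t < T)
    (a : Fin 4) (x' : ℤ)
    (hstep : stepP 0 ((T:ℤ)-1) ((((t:ℤ)-1), 0), g) a = ((x', 0), g))
    (hx0 : 0 ≤ x') (hx : x' ≤ (t:ℤ) - 1) :
    GnP T g (T - t + 1) t ((((t:ℤ)-1), 0), g) a = -((T:ℝ) - (t:ℝ)) / ((T:ℝ) - 1) := by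
  rw [GnP_succ, hstep, rewP_lt htT, hstep]
  rw [if_neg (by simp only; omega)]
  rw [dRet_off_track T hT g (T - t) (t + 1) x' (by omega) (by omega) hx0 (by push_cast; omega)]
  have h1 : ((T - t : ℕ) : ℝ) = (T:ℝ) - (t:ℝ) := by
    push_cast [Nat.cast_sub (le_of_lt htT)]; ring
  rw [h1]; ring

lemma step_a0 (T : ℕ) (hT : 2 ≤ T) (g : Bool) (t : ℕ) (ht1 : 1 ≤ t) (htT : t < T) :
    ∃ x' : ℤ, stepP 0 ((T:ℤ)-1) ((((t:ℤ)-1), 0), g) 0 = ((x', 0), g) ∧ 0 ≤ x' ∧ x' ≤ (t:ℤ) - 1 := by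
  rcases Nat.lt_or_ge t 2 with h2 | h2
  · refine ⟨(t:ℤ) - 1, ?_, by omega, le_refl _⟩
    rw [step_invalid]
    simp only [dir_zero, Prod.mk_add_mk, validP]
    push_neg
    constructor
    · intro h; omega
    · intro h; omega
  · refine ⟨(t:ℤ) - 2, ?_, by omega, by omega⟩
    rw [step_valid (s := ((((t:ℤ) - 1), 0), g)) (by
      simp only [dir_zero, Prod.mk_add_mk]
      exact Or.inl ⟨by omega, by omega, by ring⟩)]
    simp only [dir_zero, Prod.mk_add_mk]
    norm_num
    ring

lemma step_a23 (T : ℕ) (hT : 2 ≤ T) (g : Bool) (t : ℕ) (ht1 : 1 ≤ t) (htT : t < T)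
    (a : Fin 4) (ha : a = 2 ∨ a = 3) :
    stepP 0 ((T:ℤ)-1) ((((t:ℤ)-1), 0), g) a = ((((t:ℤ)-1), 0), g) := by
  rcases ha with rfl | rfl
  · rw [step_invalid]
    simp only [dir_two, Prod.mk_add_mk, validP]
    push_neg
    exact ⟨by intro _ _; omega, by intro h; omega⟩
  · rw [step_invalid]
    simp only [dir_three, Prod.mk_add_mk, validP]
    push_neg
    exact ⟨by intro _ _; omega, by intro h; omega⟩

lemma Gfull_lt (T : ℕ) (hT : 2 ≤ T) (g : Bool) (t : ℕ) (ht1 : 1 ≤ t) (htT : t < T)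
    (a : Fin 4) (ha : a ≠ 1) :
    GnP T g (T - t + 1) t ((((t:ℤ)-1), 0), g) a = -((T:ℝ) - (t:ℝ)) / ((T:ℝ) - 1) := by
  fin_cases a
  · obtain ⟨x', hstep, hx0, hx⟩ := step_a0 T hT g t ht1 htT
    exact Gfull_off T hT g t ht1 htT 0 x' hstep hx0 hx
  · exact absurd rfl ha
  · exact Gfull_off T hT g t ht1 htT 2 ((t:ℤ)-1)
      (step_a23 T hT g t ht1 htT 2 (Or.inl rfl)) (by omega) (le_refl _)
  · exact Gfull_off T hT g t ht1 htT 3 ((t:ℤ)-1)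
      (step_a23 T hT g t ht1 htT 3 (Or.inr rfl)) (by omega) (le_refl _)

lemma G1_right (T : ℕ) (hT : 2 ≤ T) (g : Bool) (t : ℕ) (ht1 : 1 ≤ t) (htT : t < T) :
    GnP T g 1 t ((((t:ℤ)-1), 0), g) 1 = 0 := by
  rw [show (1:ℕ) = 0 + 1 from rfl, GnP_succ]
  have hv : validP 0 ((T:ℤ)-1) ((((t:ℤ) - 1), (0:ℤ)) + dir 1) := by
    simp only [dir_one, Prod.mk_add_mk]
    exact Or.inl ⟨by omega, by omega, rfl⟩
  rw [rewP_lt htT, step_valid (s := ((((t:ℤ) - 1), 0), g)) hv]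
  simp [dir_one, dRetP]

lemma G1_off (T : ℕ) (hT : 2 ≤ T) (g : Bool) (t : ℕ) (ht1 : 1 ≤ t) (htT : t < T)
    (a : Fin 4) (ha : a ≠ 1) :
    GnP T g 1 t ((((t:ℤ)-1), 0), g) a = -1 / ((T:ℝ) - 1) := by
  have key : ∀ x' : ℤ, stepP 0 ((T:ℤ)-1) ((((t:ℤ)-1), 0), g) a = ((x', 0), g) →
      x' ≤ (t:ℤ) - 1 → GnP T g 1 t ((((t:ℤ)-1), 0), g) a = -1 / ((T:ℝ) - 1) := by
    intro x' hstep hx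
    rw [show (1:ℕ) = 0 + 1 from rfl, GnP_succ, rewP_lt htT, hstep]
    rw [if_neg (by simp only; omega)]
    simp [dRetP]
  fin_cases a
  · obtain ⟨x', hstep, _, hx⟩ := step_a0 T hT g t ht1 htT
    exact key x' hstep hx
  · exact absurd rfl ha
  · exact key _ (step_a23 T hT g t ht1 htT 2 (Or.inl rfl)) (le_refl _)
  · exact key _ (step_a23 T hT g t ht1 htT 3 (Or.inr rfl)) (le_refl _)

lemma GT_val (T : ℕ) (hT : 2 ≤ T) (g : Bool) (a : Fin 4) :
    GnP T g (T - T + 1) T ((((T:ℤ)-1), 0), g) a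
      = if a = (if g then 2 else 3) then 1 else 0 := by
  rw [GnP_succ, Nat.sub_self]
  have hzero : ∀ s, dRetP T (optPlan T g) 0 (T+1) s = 0 := fun _ => rfl
  rw [hzero, rewP_ge (lt_irrefl T)]
  have hvup : validP 0 ((T:ℤ)-1) ((((T:ℤ) - 1), (0:ℤ)) + dir 2) := by
    simp only [dir_two, Prod.mk_add_mk]; right; constructor <;> simp
  have hvdn : validP 0 ((T:ℤ)-1) ((((T:ℤ) - 1), (0:ℤ)) + dir 3) := by
    simp only [dir_three, Prod.mk_add_mk]; right; constructor <;> simp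
  have hv0 : validP 0 ((T:ℤ)-1) ((((T:ℤ) - 1), (0:ℤ)) + dir 0) := by
    simp only [dir_zero, Prod.mk_add_mk]
    exact Or.inl ⟨by omega, by omega, by ring⟩
  have hnv1 : ¬ validP 0 ((T:ℤ)-1) ((((T:ℤ) - 1), (0:ℤ)) + dir 1) := by
    simp only [dir_one, Prod.mk_add_mk, validP]
    push_neg
    exact ⟨fun _ h => absurd h (by omega), fun h => absurd h (by omega)⟩
  have hcase : a = 0 ∨ a = 1 ∨ a = 2 ∨ a = 3 := by fin_cases a <;> simp
  rcases hcase with rfl | rfl | rfl | rfl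
  · rw [step_valid (s := ((((T:ℤ) - 1), 0), g)) hv0]
    cases g <;> simp [goalCell, dir_zero, Prod.ext_iff] <;> omega
  · rw [step_invalid (s := ((((T:ℤ) - 1), 0), g)) hnv1]
    cases g <;> simp [goalCell, Prod.ext_iff]
  · rw [step_valid (s := ((((T:ℤ) - 1), 0), g)) hvup]
    cases g <;> simp [goalCell, dir_two, Prod.ext_iff]
  · rw [step_valid (s := ((((T:ℤ) - 1), 0), g)) hvdn]
    cases g <;> simp [goalCell, dir_three, Prod.ext_iff]

lemma traj_at (T : ℕ) (g : Bool) (t : ℕ) (ht1 : 1 ≤ t) (htT : t ≤ T) :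
    trajP T g (t - 1) = ((((t:ℤ) - 1), 0), g) := by
  rw [trajP_eq T g (t-1) (by omega)]
  congr 1
  simp [Prod.ext_iff]
  omega

lemma Astar_lt (T : ℕ) (hT : 2 ≤ T) (g : Bool) (t : ℕ) (ht1 : 1 ≤ t) (htT : t < T) :
    AstarP T g t = {1} := by
  have htraj := traj_at T g t ht1 (le_of_lt htT)
  have hden : (0:ℝ) < (T:ℝ) - 1 := by
    have : (2:ℝ) ≤ T := by exact_mod_cast hT
    linarith
  have hnum : (0:ℝ) < (T:ℝ) - (t:ℝ) := by
    have : (t:ℝ) < T := by exact_mod_cast htT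
    linarith
  have hlt : -((T:ℝ) - (t:ℝ)) / ((T:ℝ) - 1) < 1 := by
    have h := div_pos hnum hden
    rw [neg_div]
    linarith
  ext a
  simp only [AstarP, Set.mem_setOf_eq, Set.mem_singleton_iff, htraj]
  constructor
  · intro h
    by_contra hne
    have h1 := h 1
    rw [Gfull_right T hT g t ht1 htT, Gfull_lt T hT g t ht1 htT a hne] at h1
    linarith
  · rintro rfl a'
    rcases eq_or_ne a' 1 with rfl | hne
    · exact le_refl _
    · rw [Gfull_right T hT g t ht1 htT, Gfull_lt T hT g t ht1 htT a' hne]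
      linarith

lemma Astar_T (T : ℕ) (hT : 2 ≤ T) (g : Bool) :
    AstarP T g T = {if g then 2 else 3} := by
  have htraj := traj_at T g T (by omega) (le_refl T)
  ext a
  simp only [AstarP, Set.mem_setOf_eq, Set.mem_singleton_iff, htraj]
  constructor
  · intro h
    by_contra hne
    have h1 := h (if g then 2 else 3)
    rw [GT_val T hT g, GT_val T hT g, if_pos rfl, if_neg hne] at h1
    linarith
  · rintro rfl a'
    rw [GT_val T hT g, GT_val T hT g, if_pos rfl]
    split <;> split <;> norm_num

/-- in the Passive T-Maze the credit assignment length of the unique optimal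
policy equals 1: at every history visited by the optimal policy at a time `1 ≤ t ≤ T`
whose greedy-action set is a proper subset of the actions, some greedy action strictly
exceeds every non-greedy action already in expected 1-step (immediate) reward, so the
minimal separation time is 1. -/
theorem passive_tmaze_credit_assignment_length_one
    (T : ℕ) (hT : 2 ≤ T) (g : Bool) (t : ℕ) (ht1 : 1 ≤ t) (htT : t ≤ T)
    (hproper : AstarP T g t ≠ Set.univ) :
    (∃ a ∈ AstarP T g t, ∀ a' ∉ AstarP T g t,
        GnP T g 1 t (trajP T g (t - 1)) a' < GnP T g 1 t (trajP T g (t - 1)) a) ∧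
    sInf {n : ℕ | 1 ≤ n ∧ n ≤ T - t + 1 ∧
        ∃ a ∈ AstarP T g t, ∀ a' ∉ AstarP T g t,
          GnP T g n t (trajP T g (t - 1)) a' < GnP T g n t (trajP T g (t - 1)) a} = 1 := by
  have htraj := traj_at T g t ht1 htT
  have part1 : ∃ a ∈ AstarP T g t, ∀ a' ∉ AstarP T g t,
      GnP T g 1 t (trajP T g (t - 1)) a' < GnP T g 1 t (trajP T g (t - 1)) a := by
    rcases Nat.lt_or_ge t T with htlt | htge
    · -- t < T
      have hA := Astar_lt T hT g t ht1 htlt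
      refine ⟨1, by rw [hA]; rfl, ?_⟩
      intro a' ha'
      rw [hA, Set.mem_singleton_iff] at ha'
      rw [htraj, G1_right T hT g t ht1 htlt, G1_off T hT g t ht1 htlt a' ha']
      have hden : (0:ℝ) < (T:ℝ) - 1 := by
        have : (2:ℝ) ≤ T := by exact_mod_cast hT
        linarith
      have := div_pos (show (0:ℝ) < 1 by norm_num) hden
      rw [neg_div]
      linarith
    · -- t = T
      have ht : T = t := le_antisymm htge htT
      subst ht
      have hA := Astar_T T hT g
      have hTT : T - T + 1 = 1 := by omega
      refine ⟨if g then 2 else 3, by rw [hA]; rfl, ?_⟩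
      intro a' ha'
      rw [hA, Set.mem_singleton_iff] at ha'
      rw [htraj, ← hTT, GT_val T hT g, GT_val T hT g, if_pos rfl, if_neg ha']
      norm_num
  refine ⟨part1, ?_⟩
  have h1S : 1 ∈ {n : ℕ | 1 ≤ n ∧ n ≤ T - t + 1 ∧
      ∃ a ∈ AstarP T g t, ∀ a' ∉ AstarP T g t,
        GnP T g n t (trajP T g (t - 1)) a' < GnP T g n t (trajP T g (t - 1)) a} :=
    ⟨le_refl 1, by omega, part1⟩
  exact le_antisymm (Nat.sInf_le h1S) (Nat.sInf_mem ⟨1, h1S⟩).1
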